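/- arXiv:1602.05113 — 6 statements merged into one kernel-verified Lean document; each statement's English description precedes it below -/
import Mathlib

section
/- Let P be a parametric Markov chain over states S, r a region (with bounds a, b) that is well-defined for P, T ⊆ S a target set and s₀ ∈ S. For every relaxed valuation w ∈ rel(r) let q_w be the reachability-probability vector of (M w, T), and assume these least elements exist. Then there exists a relaxed valuation w* ∈ rel(r) such that w* s is a vertex of r for every s ∈ S and q_w s₀ ≤ q_{w*} s₀ for every w ∈ rel(r); i.e. the maximal reachability probability over the relaxed region is attained at a valuation assigning to every state a vertex of r. -/
/-!
The vertices of the region are the finitely many actions of a Markov decision process. As every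
transition probability is multi-affine, for a fixed vector `g` the expectation
`∑ s', P u s s' * g s'` is maximised over the region at a vertex, so the optimal value of that
process (the least fixed point of its Bellman operator) is a super-solution of the reachability
system of every relaxed chain and bounds its least solution. Conversely, for a discount `γ < 1` a
greedy memoryless vertex strategy attains the discounted optimum, because a strictly discounted
system has no spurious solutions; letting `γ → 1` bounds the undiscounted optimum by the best
vertex strategy.
-/

open Finset

/-- A stochastic matrix over a finite state space. -/
def IsStochastic {S : Type*} [Fintype S] (P : S → S → ℝ) : Prop :=
  (∀ s s', 0 ≤ P s s') ∧ ∀ s, ∑ s', P s s' = 1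

/-- A solution of the reachability equation system for target set `T`. -/
def ReachSol {S : Type*} [Fintype S] (P : S → S → ℝ) (T : Set S) (q : S → ℝ) : Prop :=
  (∀ s, 0 ≤ q s) ∧ (∀ s ∈ T, q s = 1) ∧ ∀ s ∉ T, q s = ∑ s', P s s' * q s'

/-- `p` is the reachability-probability vector: the pointwise-least solution. -/
def IsReachVec {S : Type*} [Fintype S] (P : S → S → ℝ) (T : Set S) (p : S → ℝ) : Prop :=
  ReachSol P T p ∧ ∀ q, ReachSol P T q → ∀ s, p s ≤ q s

/-- An affine real function. -/
def IsAffine (f : ℝ → ℝ) : Prop := ∃ c d : ℝ, ∀ x, f x = c * x + d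

/-- A multi-affine function on valuations. -/
def MultiAffine {V : Type*} [DecidableEq V] (f : (V → ℝ) → ℝ) : Prop :=
  ∀ (x : V) (u : V → ℝ), ∃ c d : ℝ, ∀ t : ℝ, f (Function.update u x t) = c * t + d

/-- Membership of a valuation in the region with bounds `a`, `b`. -/
def InRegion {V : Type*} (a b u : V → ℝ) : Prop := ∀ x, a x ≤ u x ∧ u x ≤ b x

/-- A vertex of the region with bounds `a`, `b`. -/
def IsVertex {V : Type*} (a b v : V → ℝ) : Prop := ∀ x, v x = a x ∨ v x = b x

/-- The region with bounds `a`, `b` is well-defined for the pMC `P`. -/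
def PMCWellDef {V S : Type*} [Fintype S] (P : (V → ℝ) → S → S → ℝ) (a b : V → ℝ) : Prop :=
  (∀ u, InRegion a b u → IsStochastic (P u)) ∧
  ∀ s s', (∀ u, InRegion a b u → P u s s' = 0) ∨ ∀ u, InRegion a b u → 0 < P u s s'

section LeastFixedPoint

variable {α : Type*} [ConditionallyCompleteLattice α]

noncomputable def lfpAbove (F : α → α) (lo : α) : α := sInf {x | lo ≤ x ∧ F x ≤ x}

variable {F : α → α} {lo y : α}

theorem lfpAbove_le (hy : lo ≤ y) (hFy : F y ≤ y) : lfpAbove F lo ≤ y :=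
  csInf_le ⟨lo, fun _ hx => hx.1⟩ ⟨hy, hFy⟩

theorem le_lfpAbove (hy : lo ≤ y) (hFy : F y ≤ y) : lo ≤ lfpAbove F lo :=
  le_csInf ⟨y, hy, hFy⟩ fun _ hx => hx.1

theorem Monotone.map_lfpAbove (hF : Monotone F) (hlo : lo ≤ F lo) (hy : lo ≤ y)
    (hFy : F y ≤ y) : F (lfpAbove F lo) = lfpAbove F lo := by
  have hle : F (lfpAbove F lo) ≤ lfpAbove F lo :=
    le_csInf ⟨y, hy, hFy⟩ fun x hx => (hF (lfpAbove_le hx.1 hx.2)).trans hx.2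
  exact le_antisymm hle (lfpAbove_le (hlo.trans (hF (le_lfpAbove hy hFy))) (hF hle))

end LeastFixedPoint

section Reachability

variable {S : Type*} [Fintype S] {M : S → S → ℝ} {T : Set S} {g p : S → ℝ}

open Classical in
noncomputable def reachOp (M : S → S → ℝ) (T : Set S) (g : S → ℝ) : S → ℝ :=
  fun s => if s ∈ T then 1 else ∑ s', M s s' * g s'

theorem reachOp_mono (hM : ∀ s s', 0 ≤ M s s') : Monotone (reachOp M T) := by
  intro g h hgh s
  unfold reachOp
  split_ifs
  · rfl
  · exact sum_le_sum fun s' _ => mul_le_mul_of_nonneg_left (hgh s') (hM s s')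

theorem reachSol_of_isFixedPt (hg : 0 ≤ g) (hfix : reachOp M T g = g) : ReachSol M T g := by
  refine ⟨hg, fun s hs => ?_, fun s hs => ?_⟩ <;>
    simpa [reachOp, hs] using (congrFun hfix s).symm

theorem IsReachVec.le_of_reachOp_le (hp : IsReachVec M T p) (hM : ∀ s s', 0 ≤ M s s')
    (hg0 : 0 ≤ g) (hg : reachOp M T g ≤ g) : p ≤ g := by
  have hzero : 0 ≤ reachOp M T 0 := fun s => by unfold reachOp; split_ifs <;> simp
  have hfix := (reachOp_mono hM).map_lfpAbove hzero hg0 hg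
  exact fun s => (hp.2 _ (reachSol_of_isFixedPt (le_lfpAbove hg0 hg) hfix) s).trans
    (lfpAbove_le hg0 hg s)

theorem ReachSol.le_of_le_discounted {γ : ℝ} (hg : ReachSol M T g) (hM : IsStochastic M)
    (hγ0 : 0 ≤ γ) (hγ1 : γ < 1) (hp1 : p ≤ 1) (hp : ∀ s ∉ T, p s ≤ γ * ∑ s', M s s' * p s') :
    p ≤ g := by
  -- at a state maximising `p - g`, one step of the system shrinks the gap by the factor `γ`
  intro t
  by_contra! ht
  have : Nonempty S := ⟨t⟩
  obtain ⟨s, hs⟩ := Finite.exists_max fun s => p s - g s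
  have hm : 0 < p s - g s := by linarith [hs t]
  have hsT : s ∉ T := fun hsT => by
    have hps : p s ≤ 1 := hp1 s
    linarith [hg.2.1 s hsT]
  have hsum : ∑ s', M s s' * (g s' + (p s - g s)) = p s := by
    simp only [mul_add, sum_add_distrib, ← sum_mul, hM.2 s, one_mul, ← hg.2.2 s hsT]
    ring
  have : p s ≤ γ * p s :=
    calc p s ≤ γ * ∑ s', M s s' * p s' := hp s hsT
      _ ≤ γ * ∑ s', M s s' * (g s' + (p s - g s)) := by
        gcongr with s'
        · exact hM.1 s s'
        · linarith [hs s']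
      _ = γ * p s := by rw [hsum]
  nlinarith [hg.1 s]

end Reachability

section MarkovDecisionProcess

open Filter Topology

variable {S A : Type*} [Fintype S] (R : A → S → S → ℝ) (T : Set S)

open Classical in
noncomputable def bellman (γ : ℝ) (g : S → ℝ) : S → ℝ :=
  fun s => if s ∈ T then 1 else γ * ⨆ c, ∑ s', R c s s' * g s'

/-- The optimal `γ`-discounted probability of reaching `T`. -/
noncomputable def optValue (γ : ℝ) : S → ℝ := lfpAbove (bellman R T γ) 0

variable {R T} {γ γ' : ℝ} {g : S → ℝ}

theorem zero_le_bellman_zero : (0 : S → ℝ) ≤ bellman R T γ 0 := by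
  intro s
  unfold bellman
  split_ifs <;> simp

theorem optValue_le (hg0 : 0 ≤ g) (hg : bellman R T γ g ≤ g) : optValue R T γ ≤ g :=
  lfpAbove_le hg0 hg

theorem bellman_one_le_one [Nonempty A] (hR : ∀ c, IsStochastic (R c)) (hγ : γ ≤ 1) :
    bellman R T γ 1 ≤ 1 := by
  intro s
  unfold bellman
  split_ifs
  · rfl
  · simpa [(hR _).2 s] using hγ

theorem optValue_nonneg [Nonempty A] (hR : ∀ c, IsStochastic (R c)) (hγ : γ ≤ 1) :
    0 ≤ optValue R T γ :=
  le_lfpAbove zero_le_one (bellman_one_le_one hR hγ)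

theorem optValue_le_one [Nonempty A] (hR : ∀ c, IsStochastic (R c)) (hγ : γ ≤ 1) :
    optValue R T γ ≤ 1 :=
  optValue_le zero_le_one (bellman_one_le_one hR hγ)

theorem bellman_mono [Finite A] (hR : ∀ c, IsStochastic (R c)) (hγ : 0 ≤ γ) :
    Monotone (bellman R T γ) := by
  intro g h hgh s
  unfold bellman
  split_ifs
  · rfl
  · refine mul_le_mul_of_nonneg_left (ciSup_mono (Finite.bddAbove_range _) fun c => ?_) hγ
    exact sum_le_sum fun s' _ => mul_le_mul_of_nonneg_left (hgh s') ((hR c).1 s s')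

variable [Finite A] [Nonempty A]

theorem bellman_optValue (hR : ∀ c, IsStochastic (R c)) (hγ0 : 0 ≤ γ) (hγ1 : γ ≤ 1) :
    bellman R T γ (optValue R T γ) = optValue R T γ :=
  (bellman_mono hR hγ0).map_lfpAbove zero_le_bellman_zero zero_le_one (bellman_one_le_one hR hγ1)

theorem bellman_le_bellman (hR : ∀ c, IsStochastic (R c)) (hγγ' : γ ≤ γ') (hg : 0 ≤ g) :
    bellman R T γ g ≤ bellman R T γ' g := by
  intro s
  unfold bellman
  split_ifs
  · rfl
  · refine mul_le_mul_of_nonneg_right hγγ' ?_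
    obtain c := Classical.arbitrary A
    exact le_ciSup_of_le (Finite.bddAbove_range _) c
      (sum_nonneg fun s' _ => mul_nonneg ((hR c).1 s s') (hg s'))

theorem optValue_mono (hR : ∀ c, IsStochastic (R c)) (hγ0 : 0 ≤ γ) (hγγ' : γ ≤ γ')
    (hγ'1 : γ' ≤ 1) : optValue R T γ ≤ optValue R T γ' := by
  refine optValue_le (optValue_nonneg hR hγ'1) ?_
  calc bellman R T γ (optValue R T γ') ≤ bellman R T γ' (optValue R T γ') :=
        bellman_le_bellman hR hγγ' (optValue_nonneg hR hγ'1)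
    _ = optValue R T γ' := bellman_optValue hR (hγ0.trans hγγ') hγ'1

/-- The greedy strategy works because a strictly discounted system has no spurious solutions. -/
theorem exists_strategy_optValue_le (hR : ∀ c, IsStochastic (R c)) (hγ0 : 0 ≤ γ)
    (hγ1 : γ < 1) : ∃ σ : S → A, ∀ g, ReachSol (fun s s' => R (σ s) s s') T g →
      optValue R T γ ≤ g := by
  choose σ hσ using fun s =>
    exists_eq_ciSup_of_finite (f := fun c => ∑ s', R c s s' * optValue R T γ s')
  refine ⟨σ, fun g hg => hg.le_of_le_discounted ⟨fun s => (hR _).1 s, fun s => (hR _).2 s⟩ hγ0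
    hγ1 (optValue_le_one hR hγ1.le) fun s hs => ?_⟩
  conv_lhs => rw [← bellman_optValue hR hγ0 hγ1.le]
  simp only [bellman, if_neg hs, hσ s]
  rfl

theorem bellman_iSup_le {γ : ℕ → ℝ} {v : ℕ → S → ℝ}
    (hγ0 : ∀ n, 0 ≤ γ n) (hγ : Tendsto γ atTop (𝓝 1)) (hv : Monotone v)
    (hbdd : ∀ s, BddAbove (Set.range fun n => v n s))
    (hsuper : ∀ n, bellman R T (γ n) (v n) ≤ v n) :
    bellman R T 1 (fun s => ⨆ n, v n s) ≤ fun s => ⨆ n, v n s := by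
  intro s
  have hle : ∀ n, v n s ≤ ⨆ n, v n s := le_ciSup (hbdd s)
  by_cases hs : s ∈ T
  · simpa [bellman, hs] using (hsuper 0 s).trans (hle 0)
  simp only [bellman, if_neg hs, one_mul]
  refine ciSup_le fun c => ?_
  have hlim := hγ.mul (tendsto_finsetSum univ fun s' _ =>
    (tendsto_atTop_ciSup (fun _ _ h => hv h s') (hbdd s')).const_mul (R c s s'))
  rw [one_mul] at hlim
  refine le_of_tendsto' hlim fun n => ?_
  calc γ n * ∑ s', R c s s' * v n s' ≤ γ n * ⨆ c, ∑ s', R c s s' * v n s' :=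
        mul_le_mul_of_nonneg_left
          (le_ciSup (Finite.bddAbove_range fun c => ∑ s', R c s s' * v n s') c) (hγ0 n)
    _ ≤ v n s := by simpa [bellman, hs] using hsuper n s
    _ ≤ ⨆ n, v n s := hle n

theorem optValue_one_le_of_forall_lt_one (hR : ∀ c, IsStochastic (R c)) {s₀ : S} {C : ℝ}
    (h : ∀ γ, 0 ≤ γ → γ < 1 → optValue R T γ s₀ ≤ C) : optValue R T 1 s₀ ≤ C := by
  let γ : ℕ → ℝ := fun n => 1 - 1 / (n + 1)
  have hγ0 : ∀ n, 0 ≤ γ n := fun n => sub_nonneg.2 (div_le_one_of_le₀ (by simp) (by positivity))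
  have hγ1 : ∀ n, γ n < 1 := fun n => sub_lt_self 1 (by positivity)
  have hγmono : Monotone γ := fun m n hmn => by dsimp only [γ]; gcongr
  have hγlim : Tendsto γ atTop (𝓝 1) := by
    simpa [γ] using (tendsto_const_nhds (x := (1 : ℝ))).sub tendsto_one_div_add_atTop_nhds_zero_nat
  let v : ℕ → S → ℝ := fun n => optValue R T (γ n)
  have hv : Monotone v := fun m n hmn => optValue_mono hR (hγ0 m) (hγmono hmn) (hγ1 n).le
  have hbdd : ∀ s, BddAbove (Set.range fun n => v n s) := fun s =>
    ⟨1, by rintro _ ⟨n, rfl⟩; exact optValue_le_one hR (hγ1 n).le s⟩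
  have hsuper : ∀ n, bellman R T (γ n) (v n) ≤ v n := fun n =>
    (bellman_optValue hR (hγ0 n) (hγ1 n).le).le
  calc optValue R T 1 s₀ ≤ ⨆ n, v n s₀ :=
        optValue_le (fun s => (optValue_nonneg hR (hγ1 0).le s).trans (le_ciSup (hbdd s) 0))
          (bellman_iSup_le hγ0 hγlim hv hbdd hsuper) s₀
    _ ≤ C := ciSup_le fun n => h _ (hγ0 n) (hγ1 n)

theorem exists_strategy_optValue_one_le (hR : ∀ c, IsStochastic (R c)) (q : (S → A) → S → ℝ)
    (hq : ∀ σ, ReachSol (fun s s' => R (σ s) s s') T (q σ)) (s₀ : S) :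
    ∃ σ, optValue R T 1 s₀ ≤ q σ s₀ := by
  obtain ⟨σ₀, hσ₀⟩ := Finite.exists_max fun σ => q σ s₀
  refine ⟨σ₀, optValue_one_le_of_forall_lt_one hR fun γ hγ0 hγ1 => ?_⟩
  obtain ⟨σ, hσ⟩ := exists_strategy_optValue_le hR hγ0 hγ1
  exact (hσ _ (hq σ) s₀).trans (hσ₀ σ)

end MarkovDecisionProcess

section Region

variable {V : Type*} {a b : V → ℝ}

theorem IsVertex.inRegion (hab : ∀ x, a x ≤ b x) {v : V → ℝ} (hv : IsVertex a b v) :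
    InRegion a b v := fun x => by
  rcases hv x with h | h <;> simp [h, hab x]

theorem finite_setOf_isVertex [Finite V] (a b : V → ℝ) : {v | IsVertex a b v}.Finite :=
  (Set.Finite.pi fun x => Set.toFinite {a x, b x}).subset fun _ hv x _ => hv x

instance [Finite V] (a b : V → ℝ) : Finite {v // IsVertex a b v} :=
  (finite_setOf_isVertex a b).to_subtype

instance (a b : V → ℝ) : Nonempty {v // IsVertex a b v} := ⟨⟨a, fun _ => Or.inl rfl⟩⟩

variable [DecidableEq V] {f : (V → ℝ) → ℝ}

theorem MultiAffine.sum_mul {ι : Type*} [Fintype ι] {f : ι → (V → ℝ) → ℝ}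
    (hf : ∀ i, MultiAffine (f i)) (k : ι → ℝ) : MultiAffine fun u => ∑ i, f i u * k i := by
  intro x u
  choose c d hcd using fun i => hf i x u
  refine ⟨∑ i, c i * k i, ∑ i, d i * k i, fun t => ?_⟩
  simp only [hcd, add_mul, sum_add_distrib, Finset.sum_mul, mul_right_comm]

theorem MultiAffine.exists_update_le (hf : MultiAffine f) (u : V → ℝ) (x : V) {lo hi : ℝ}
    (hlo : lo ≤ u x) (hhi : u x ≤ hi) :
    ∃ t, (t = lo ∨ t = hi) ∧ f u ≤ f (Function.update u x t) := by
  obtain ⟨c, d, hcd⟩ := hf x u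
  have hu : f u = c * u x + d := by simpa using hcd (u x)
  rcases le_total 0 c with hc | hc
  · exact ⟨hi, Or.inr rfl, by rw [hu, hcd]; nlinarith⟩
  · exact ⟨lo, Or.inl rfl, by rw [hu, hcd]; nlinarith⟩

theorem MultiAffine.exists_isVertex_le [Fintype V] (hab : ∀ x, a x ≤ b x) (hf : MultiAffine f)
    {u : V → ℝ} (hu : InRegion a b u) : ∃ v, IsVertex a b v ∧ f u ≤ f v := by
  suffices ∀ F : Finset V, ∃ v, InRegion a b v ∧ (∀ x ∈ F, v x = a x ∨ v x = b x) ∧ f u ≤ f v by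
    obtain ⟨v, -, hv, hle⟩ := this univ
    exact ⟨v, fun x => hv x (mem_univ x), hle⟩
  intro F
  induction F using Finset.induction_on with
  | empty => exact ⟨u, hu, by simp, le_rfl⟩
  | insert y F _ ih =>
    obtain ⟨v, hv, hvF, hle⟩ := ih
    obtain ⟨t, ht, hle'⟩ := hf.exists_update_le v y (hv y).1 (hv y).2
    refine ⟨Function.update v y t, fun x => ?_, fun x hx => ?_, hle.trans hle'⟩
    · rcases eq_or_ne x y with rfl | hxy
      · rcases ht with rfl | rfl <;> simp [hab x]
      · simpa [hxy] using hv x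
    · rcases eq_or_ne x y with rfl | hxy
      · simpa using ht
      · simpa [hxy] using hvF x ((mem_insert.1 hx).resolve_left hxy)

end Region

theorem reachOp_le_bellman_vertices {V S : Type*} [Fintype V] [DecidableEq V] [Fintype S]
    {P : (V → ℝ) → S → S → ℝ} (hma : ∀ s s', MultiAffine fun u => P u s s') {a b : V → ℝ}
    (hab : ∀ x, a x ≤ b x) {w : S → V → ℝ} (hw : ∀ s, InRegion a b (w s)) (T : Set S)
    (g : S → ℝ) :
    reachOp (fun s s' => P (w s) s s') T g ≤
      bellman (fun v : {v // IsVertex a b v} => P v.1) T 1 g := by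
  intro s
  by_cases hs : s ∈ T
  · simp [reachOp, bellman, hs]
  simp only [reachOp, bellman, if_neg hs, one_mul]
  obtain ⟨v, hv, hle⟩ := (MultiAffine.sum_mul (hma s) g).exists_isVertex_le hab (hw s)
  exact hle.trans (le_ciSup (f := fun c : {v // IsVertex a b v} => ∑ s', P c.1 s s' * g s')
    (Finite.bddAbove_range _) ⟨v, hv⟩)

theorem pMC_relaxation_vertex_optimal_general
    {V S : Type*} [Fintype V] [DecidableEq V] [Fintype S]
    (P : (V → ℝ) → S → S → ℝ)
    (hma : ∀ s s', MultiAffine fun u => P u s s')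
    (a b : V → ℝ) (hab : ∀ x, a x ≤ b x)
    (hwd : PMCWellDef P a b)
    (T : Set S) (s₀ : S)
    (q : (S → V → ℝ) → S → ℝ)
    (hq : ∀ w : S → V → ℝ, (∀ s, InRegion a b (w s)) →
      IsReachVec (fun s s' => P (w s) s s') T (q w)) :
    ∃ wstar : S → V → ℝ, (∀ s, IsVertex a b (wstar s)) ∧ (∀ s, InRegion a b (wstar s)) ∧
      ∀ w : S → V → ℝ, (∀ s, InRegion a b (w s)) → q w s₀ ≤ q wstar s₀ := by
  let R : {v // IsVertex a b v} → S → S → ℝ := fun v => P v.1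
  have hR : ∀ v, IsStochastic (R v) := fun v => hwd.1 _ (v.2.inRegion hab)
  obtain ⟨σ, hσ⟩ := exists_strategy_optValue_one_le hR (fun σ => q fun s => (σ s).1)
    (fun σ => (hq _ fun s => (σ s).2.inRegion hab).1) s₀
  refine ⟨fun s => (σ s).1, fun s => (σ s).2, fun s => (σ s).2.inRegion hab, fun w hw => ?_⟩
  have hsuper : reachOp (fun s s' => P (w s) s s') T (optValue R T 1) ≤ optValue R T 1 :=
    (reachOp_le_bellman_vertices hma hab hw T _).trans (bellman_optValue hR zero_le_one le_rfl).le
  exact ((hq w hw).le_of_reachOp_le (fun s => (hwd.1 _ (hw s)).1 s)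
    (optValue_nonneg hR le_rfl) hsuper s₀).trans hσ

/-- The maximal reachability probability over the relaxed region is attained
at a relaxed valuation assigning to every state a vertex of the region. -/
theorem pMC_relaxation_vertex_optimal
    {V S : Type*} [Fintype V] [Nonempty V] [DecidableEq V] [Fintype S] [Nonempty S]
    (P : (V → ℝ) → S → S → ℝ)
    (hma : ∀ s s', MultiAffine fun u => P u s s')
    (a b : V → ℝ) (hab : ∀ x, a x ≤ b x)
    (hwd : PMCWellDef P a b)
    (T : Set S) (s₀ : S)
    (q : (S → V → ℝ) → S → ℝ)
    (hq : ∀ w : S → V → ℝ, (∀ s, InRegion a b (w s)) →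
      IsReachVec (fun s s' => P (w s) s s') T (q w)) :
    ∃ wstar : S → V → ℝ, (∀ s, IsVertex a b (wstar s)) ∧ (∀ s, InRegion a b (wstar s)) ∧
      ∀ w : S → V → ℝ, (∀ s, InRegion a b (w s)) → q w s₀ ≤ q wstar s₀ :=
  pMC_relaxation_vertex_optimal_general P hma a b hab hwd T s₀ q hq
end

section
/- Let f, g : ℝ → ℝ be affine functions and let a ≤ b be reals such that g x < 1 for every x ∈ [a, b], and set h x = f x / (1 − g x). Then for every x ∈ [a, b], min (h a) (h b) ≤ h x ≤ max (h a) (h b); in particular h attains its maximum and its minimum over [a, b] at an endpoint of the interval. -/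
lemma mediant_between (u v p q w1 w2 : ℝ) (hp : 0 < p) (hq : 0 < q)
    (hw1 : 0 ≤ w1) (hw2 : 0 ≤ w2) (hw : 0 < w1 * p + w2 * q) :
    min (u / p) (v / q) ≤ (w1 * u + w2 * v) / (w1 * p + w2 * q) ∧
      (w1 * u + w2 * v) / (w1 * p + w2 * q) ≤ max (u / p) (v / q) := by
  constructor
  · rw [le_div_iff₀ hw]
    have h1 := (le_div_iff₀ hp).mp (min_le_left (u / p) (v / q))
    have h2 := (le_div_iff₀ hq).mp (min_le_right (u / p) (v / q))
    nlinarith [mul_le_mul_of_nonneg_left h1 hw1, mul_le_mul_of_nonneg_left h2 hw2]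
  · rw [div_le_iff₀ hw]
    have h1 := (div_le_iff₀ hp).mp (le_max_left (u / p) (v / q))
    have h2 := (div_le_iff₀ hq).mp (le_max_right (u / p) (v / q))
    nlinarith [mul_le_mul_of_nonneg_left h1 hw1, mul_le_mul_of_nonneg_left h2 hw2]

/-- The quotient `h x = f x / (1 - g x)` of affine functions with `g < 1`
on `[a, b]` attains its maximum and minimum over `[a, b]` at an endpoint. -/
theorem affine_ratio_extrema_at_endpoints
    (f g : ℝ → ℝ) (hf : IsAffine f) (hg : IsAffine g)
    (a b : ℝ) (hab : a ≤ b)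
    (hg1 : ∀ x ∈ Set.Icc a b, g x < 1) :
    ∀ x ∈ Set.Icc a b,
      min (f a / (1 - g a)) (f b / (1 - g b)) ≤ f x / (1 - g x) ∧
        f x / (1 - g x) ≤ max (f a / (1 - g a)) (f b / (1 - g b)) := by
  obtain ⟨c, d, hfeq⟩ := hf
  obtain ⟨e, k, hgeq⟩ := hg
  intro x hx
  obtain ⟨hax, hxb⟩ := hx
  have hDa : 0 < 1 - g a := by linarith [hg1 a ⟨le_refl a, hab⟩]
  have hDb : 0 < 1 - g b := by linarith [hg1 b ⟨hab, le_refl b⟩]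
  have hDx : 0 < 1 - g x := by linarith [hg1 x ⟨hax, hxb⟩]
  rcases eq_or_lt_of_le hab with heq | hlt
  · have hxa : x = a := le_antisymm (heq ▸ hxb) hax
    subst hxa; subst heq
    exact ⟨min_le_left _ _, le_max_left _ _⟩
  · set t : ℝ := (x - a) / (b - a) with ht
    have hba : 0 < b - a := by linarith
    have hxeq : x = (1 - t) * a + t * b := by
      rw [ht]; field_simp; ring
    have ht0 : 0 ≤ t := div_nonneg (by linarith) (by linarith)
    have ht1 : t ≤ 1 := (div_le_one hba).mpr (by linarith)
    have hfx : f x = (1 - t) * f a + t * f b := by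
      rw [hfeq, hfeq, hfeq, hxeq]; ring
    have hgx : 1 - g x = (1 - t) * (1 - g a) + t * (1 - g b) := by
      rw [hgeq, hgeq, hgeq, hxeq]; ring
    rw [hfx, hgx]
    exact mediant_between (f a) (f b) (1 - g a) (1 - g b) (1 - t) t hDa hDb
      (by linarith) ht0 (by rw [← hgx]; exact hDx)
end

section
/- Let (S, P) be a finite Markov chain, T ⊆ S a target set, s ∈ S with s ∉ T, and let p be the reachability-probability vector of (P, T). Let q : S → ℝ be the pointwise-least nonnegative function satisfying q t = 1 for t ∈ T, q s = 0, and q t = ∑_{t'} P t t' · q t' for t ∉ T with t ≠ s (the probability of reaching T without passing through s), and let ρ : S → ℝ be the pointwise-least nonnegative function satisfying ρ t = 0 for t ∈ T, ρ s = 1, and ρ t = ∑_{t'} P t t' · ρ t' for t ∉ T with t ≠ s (the probability of reaching s before T); assume these least elements exist. Then p s = (∑_{s'} P s s' · q s') + (∑_{s'} P s s' · ρ s') · p s. Moreover, if p s > 0 then ∑_{s'} P s s' · ρ s' < 1 and hence p s = (∑_{s'} P s s' · q s') / (1 − ∑_{s'} P s s' · ρ s'). -/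
open Finset

/-- A solution of the equation system for reaching `T` without passing through `s`. -/
def AvoidReachSol {S : Type*} [Fintype S] (P : S → S → ℝ) (T : Set S) (s : S)
    (q : S → ℝ) : Prop :=
  (∀ t, 0 ≤ q t) ∧ (∀ t ∈ T, q t = 1) ∧ q s = 0 ∧
    ∀ t, t ∉ T → t ≠ s → q t = ∑ t', P t t' * q t'

/-- A solution of the equation system for reaching `s` before `T`. -/
def ReachBeforeSol {S : Type*} [Fintype S] (P : S → S → ℝ) (T : Set S) (s : S)
    (ρ : S → ℝ) : Prop :=
  (∀ t, 0 ≤ ρ t) ∧ (∀ t ∈ T, ρ t = 0) ∧ ρ s = 1 ∧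
    ∀ t, t ∉ T → t ≠ s → ρ t = ∑ t', P t t' * ρ t'

/-!
Write `a = ∑ P s s' * q s'` and `b = ∑ P s s' * ρ s'`. The least solution `ρ` lies below every
nonnegative supersolution of its system (Knaster–Tarski on the order interval `[0, w]`), so
`ρ * p s ≤ p`; then `p - ρ * p s` solves the system of `q`, and minimality of `q` gives
`a + b * p s ≤ p s`. Conversely, if `b < 1` then `q + ρ * (a / (1 - b))` solves the system of `p`,
so `p s ≤ a / (1 - b)`; if `b ≥ 1` the reverse inequality is immediate. Finally `b = 1` would make
`1 - ρ` a solution of the system of `p` vanishing at `s`, which is impossible when `0 < p s`.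
-/

theorem exists_fixedPoint_mem_Icc {α : Type*} [ConditionallyCompleteLattice α] {f : α → α}
    (hf : Monotone f) {a b : α} (hab : a ≤ b) (ha : a ≤ f a) (hb : f b ≤ b) :
    ∃ x ∈ Set.Icc a b, f x = x := by
  set D := {y | a ≤ y ∧ f y ≤ y}
  have hD : D.Nonempty := ⟨b, hab, hb⟩
  have hDa : a ∈ lowerBounds D := fun y hy => hy.1
  have hax : a ≤ sInf D := le_csInf hD hDa
  have hfx : f (sInf D) ≤ sInf D :=
    le_csInf hD fun y hy => (hf (csInf_le ⟨a, hDa⟩ hy)).trans hy.2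
  have hxf : sInf D ≤ f (sInf D) :=
    csInf_le ⟨a, hDa⟩ ⟨ha.trans (hf hax), hf hfx⟩
  exact ⟨sInf D, ⟨hax, csInf_le ⟨a, hDa⟩ ⟨hab, hb⟩⟩, le_antisymm hfx hxf⟩

section BoundaryProblem

variable {S : Type*} [Fintype S]

def IsBoundarySol (P : S → S → ℝ) (B : Set S) (g x : S → ℝ) : Prop :=
  (∀ t, 0 ≤ x t) ∧ (∀ t ∈ B, x t = g t) ∧ ∀ t ∉ B, x t = ∑ t', P t t' * x t'

theorem IsBoundarySol.least_le_supersolution {P : S → S → ℝ} (hP : ∀ t t', 0 ≤ P t t')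
    {B : Set S} {g x : S → ℝ} (hx : IsLeast {y | IsBoundarySol P B g y} x)
    {w : S → ℝ} (hw0 : 0 ≤ w) (hwB : ∀ t ∈ B, g t ≤ w t)
    (hw : ∀ t ∉ B, ∑ t', P t t' * w t' ≤ w t) : x ≤ w := by
  classical
  let F : (S → ℝ) → S → ℝ := fun y t => if t ∈ B then g t else ∑ t', P t t' * y t'
  have hF : Monotone F := fun y z hyz t => by
    dsimp only [F]
    split_ifs
    · rfl
    · exact sum_le_sum fun t' _ => mul_le_mul_of_nonneg_left (hyz t') (hP t t')
  have hF0 : 0 ≤ F 0 := fun t => by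
    dsimp only [F]
    split_ifs with ht
    · exact (hx.1.2.1 t ht).symm ▸ hx.1.1 t
    · simp
  have hFw : F w ≤ w := fun t => by
    dsimp only [F]
    split_ifs with ht
    · exact hwB t ht
    · exact hw t ht
  obtain ⟨y, ⟨hy0, hyw⟩, hFy⟩ := exists_fixedPoint_mem_Icc hF hw0 hF0 hFw
  have hy : IsBoundarySol P B g y := by
    refine ⟨hy0, fun t ht => ?_, fun t ht => ?_⟩ <;>
    · simpa [F, ht] using (congrFun hFy t).symm
  exact (hx.2 hy).trans hyw

end BoundaryProblem

theorem sum_mul_add_mul {ι : Type*} (u : Finset ι) (P x y : ι → ℝ) (c : ℝ) :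
    ∑ i ∈ u, P i * (x i + y i * c) = ∑ i ∈ u, P i * x i + (∑ i ∈ u, P i * y i) * c := by
  simp only [mul_add, ← mul_assoc, sum_add_distrib, sum_mul]

theorem sum_mul_sub_mul {ι : Type*} (u : Finset ι) (P x y : ι → ℝ) (c : ℝ) :
    ∑ i ∈ u, P i * (x i - y i * c) = ∑ i ∈ u, P i * x i - (∑ i ∈ u, P i * y i) * c := by
  simp only [mul_sub, ← mul_assoc, sum_sub_distrib, sum_mul]

section MarkovChain

variable {S : Type*} [Fintype S] {P : S → S → ℝ} {T : Set S} {s : S} {p q ρ : S → ℝ}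

theorem reachBeforeSol_iff (hs : s ∉ T) :
    ReachBeforeSol P T s ρ ↔ IsBoundarySol P (insert s T) (({s} : Set S).indicator 1) ρ := by
  have hT : ∀ t ∈ T, ({s} : Set S).indicator (1 : S → ℝ) t = 0 := fun t ht =>
    Set.indicator_of_notMem (ne_of_mem_of_not_mem ht hs) 1
  constructor
  · rintro ⟨h0, hT0, hs1, hsum⟩
    refine ⟨h0, ?_, fun t ht => ?_⟩
    · rintro t (rfl | ht)
      · simpa using hs1
      · rw [hT0 t ht, hT t ht]
    · rw [Set.mem_insert_iff, not_or] at ht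
      exact hsum t ht.2 ht.1
  · rintro ⟨h0, hB, hsum⟩
    refine ⟨h0, fun t ht => (hB t (Or.inr ht)).trans (hT t ht),
      by simpa using hB s (Set.mem_insert s T), fun t ht hts => hsum t ?_⟩
    simp [hts, ht]

theorem ReachBeforeSol.least_le_supersolution (hP : ∀ t t', 0 ≤ P t t') (hs : s ∉ T)
    (hρ : IsLeast {ρ' | ReachBeforeSol P T s ρ'} ρ) {w : S → ℝ} (hw0 : 0 ≤ w) (hws : 1 ≤ w s)
    (hw : ∀ t, t ∉ T → t ≠ s → ∑ t', P t t' * w t' ≤ w t) : ρ ≤ w := by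
  simp only [reachBeforeSol_iff hs] at hρ
  refine IsBoundarySol.least_le_supersolution hP hρ hw0 ?_ fun t ht => ?_
  · rintro t (rfl | ht)
    · simpa using hws
    · rw [Set.indicator_of_notMem (Set.notMem_singleton_iff.2 (ne_of_mem_of_not_mem ht hs))]
      exact hw0 t
  · rw [Set.mem_insert_iff, not_or] at ht
    exact hw t ht.2 ht.1

theorem ReachBeforeSol.least_le_one (hP : IsStochastic P) (hs : s ∉ T)
    (hρ : IsLeast {ρ' | ReachBeforeSol P T s ρ'} ρ) : ρ ≤ 1 :=
  least_le_supersolution hP.1 hs hρ zero_le_one le_rfl fun t _ _ => by simp [hP.2 t]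

theorem ReachBeforeSol.least_mul_le_reachSol (hP : ∀ t t', 0 ≤ P t t') (hs : s ∉ T)
    (hρ : IsLeast {ρ' | ReachBeforeSol P T s ρ'} ρ) (hp : ReachSol P T p) :
    ∀ t, ρ t * p s ≤ p t := by
  intro t
  rcases (hp.1 s).eq_or_lt with hps | hps
  · simpa [← hps] using hp.1 t
  refine (le_div_iff₀ hps).1 (least_le_supersolution hP hs hρ (w := fun t => p t / p s)
    (fun t => div_nonneg (hp.1 t) hps.le) (div_self hps.ne').ge (fun t ht _ => ?_) t)
  simp only [hp.2.2 t ht, sum_div, mul_div_assoc, le_refl]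

theorem avoidReachSol_sub_mul (hp : ReachSol P T p) (hρ : ReachBeforeSol P T s ρ)
    (hle : ∀ t, ρ t * p s ≤ p t) : AvoidReachSol P T s fun t => p t - ρ t * p s := by
  refine ⟨fun t => sub_nonneg.2 (hle t), fun t ht => ?_, ?_, fun t ht hts => ?_⟩
  · simp [hp.2.1 t ht, hρ.2.1 t ht]
  · simp [hρ.2.2.1]
  · rw [sum_mul_sub_mul, ← hp.2.2 t ht, ← hρ.2.2.2 t ht hts]

theorem reachSol_add_mul (hq : AvoidReachSol P T s q) (hρ : ReachBeforeSol P T s ρ) {c : ℝ}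
    (hc0 : 0 ≤ c) (hc : c = ∑ t, P s t * q t + (∑ t, P s t * ρ t) * c) :
    ReachSol P T fun t => q t + ρ t * c := by
  refine ⟨fun t => add_nonneg (hq.1 t) (mul_nonneg (hρ.1 t) hc0), fun t ht => ?_, fun t ht => ?_⟩
  · simp [hq.2.1 t ht, hρ.2.1 t ht]
  rw [sum_mul_add_mul]
  by_cases hts : t = s
  · subst hts
    simpa [hq.2.2.1, hρ.2.2.1] using hc
  · rw [← hq.2.2.2 t ht hts, ← hρ.2.2.2 t ht hts]

theorem reachSol_one_sub (hP : IsStochastic P) (hρ : ReachBeforeSol P T s ρ)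
    (hρ1 : ρ ≤ 1) (hb : ∑ t, P s t * ρ t = 1) : ReachSol P T fun t => 1 - ρ t := by
  refine ⟨fun t => sub_nonneg.2 (hρ1 t), fun t ht => by simp [hρ.2.1 t ht], fun t ht => ?_⟩
  have hsum : ∑ t', P t t' * (1 - ρ t') = 1 - ∑ t', P t t' * ρ t' := by
    simp only [mul_sub, mul_one, sum_sub_distrib, hP.2 t]
  rw [hsum]
  by_cases hts : t = s
  · subst hts
    simp only [hb, hρ.2.2.1]
  · rw [← hρ.2.2.2 t ht hts]

theorem sum_avoid_add_mul_le (hP : ∀ t t', 0 ≤ P t t') (hs : s ∉ T) (hp : ReachSol P T p)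
    (hq : q ∈ lowerBounds {q' | AvoidReachSol P T s q'})
    (hρ : IsLeast {ρ' | ReachBeforeSol P T s ρ'} ρ) :
    ∑ t, P s t * q t + (∑ t, P s t * ρ t) * p s ≤ p s := by
  have hqp := hq (avoidReachSol_sub_mul hp hρ.1 (ReachBeforeSol.least_mul_le_reachSol hP hs hρ hp))
  calc ∑ t, P s t * q t + (∑ t, P s t * ρ t) * p s
      ≤ ∑ t, P s t * (p t - ρ t * p s) + (∑ t, P s t * ρ t) * p s := by
        gcongr with t
        exacts [hP s t, hqp t]
    _ = p s := by rw [sum_mul_sub_mul, ← hp.2.2 s hs, sub_add_cancel]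

theorem mul_one_sub_le_sum_avoid (hP : ∀ t t', 0 ≤ P t t')
    (hp : p ∈ lowerBounds {p' | ReachSol P T p'}) (hq : AvoidReachSol P T s q)
    (hρ : ReachBeforeSol P T s ρ) (hb : ∑ t, P s t * ρ t < 1) :
    p s * (1 - ∑ t, P s t * ρ t) ≤ ∑ t, P s t * q t := by
  set a := ∑ t, P s t * q t
  set b := ∑ t, P s t * ρ t
  have hb' : 0 < 1 - b := sub_pos.2 hb
  have ha : 0 ≤ a := sum_nonneg fun t _ => mul_nonneg (hP s t) (hq.1 t)
  have hc : a / (1 - b) = a + b * (a / (1 - b)) := by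
    field_simp
    ring
  have hpc := hp (reachSol_add_mul hq hρ (div_nonneg ha hb'.le) hc) s
  rw [hq.2.2.1, hρ.2.2.1, zero_add, one_mul] at hpc
  exact (le_div_iff₀ hb').1 hpc

theorem sum_reachBefore_lt_one (hP : IsStochastic P) (hs : s ∉ T)
    (hp : p ∈ lowerBounds {p' | ReachSol P T p'})
    (hρ : IsLeast {ρ' | ReachBeforeSol P T s ρ'} ρ) (hps : 0 < p s) : ∑ t, P s t * ρ t < 1 := by
  have hρ1 := ReachBeforeSol.least_le_one hP hs hρ
  have hb1 : ∑ t, P s t * ρ t ≤ 1 :=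
    (sum_le_sum fun t _ => mul_le_mul_of_nonneg_left (hρ1 t) (hP.1 s t)).trans_eq
      (by simp [hP.2 s])
  refine hb1.lt_of_ne fun hb => ?_
  have hp0 := hp (reachSol_one_sub hP hρ.1 hρ1 hb) s
  rw [hρ.1.2.2.1, sub_self] at hp0
  exact hps.not_ge hp0

end MarkovChain

theorem reach_prob_decomposition_general
    {S : Type*} [Fintype S]
    (P : S → S → ℝ) (hP : IsStochastic P)
    (T : Set S) (s : S) (hs : s ∉ T)
    (p : S → ℝ) (hp : IsReachVec P T p)
    (q : S → ℝ)
    (hq : AvoidReachSol P T s q ∧ ∀ q', AvoidReachSol P T s q' → ∀ t, q t ≤ q' t)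
    (ρ : S → ℝ)
    (hρ : ReachBeforeSol P T s ρ ∧ ∀ ρ', ReachBeforeSol P T s ρ' → ∀ t, ρ t ≤ ρ' t) :
    p s = (∑ s', P s s' * q s') + (∑ s', P s s' * ρ s') * p s ∧
      (0 < p s → (∑ s', P s s' * ρ s') < 1 ∧
        p s = (∑ s', P s s' * q s') / (1 - ∑ s', P s s' * ρ s')) := by
  set a := ∑ s', P s s' * q s'
  set b := ∑ s', P s s' * ρ s'
  have hle : a + b * p s ≤ p s := sum_avoid_add_mul_le hP.1 hs hp.1 hq.2 hρ
  have hge : p s ≤ a + b * p s := by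
    by_cases hb : b < 1
    · linarith [mul_one_sub_le_sum_avoid hP.1 hp.2 hq.1 hρ.1 hb]
    · have ha : 0 ≤ a := sum_nonneg fun t _ => mul_nonneg (hP.1 s t) (hq.1.1 t)
      linarith [le_mul_of_one_le_left (hp.1.1 s) (not_lt.1 hb)]
  refine ⟨le_antisymm hge hle, fun hps => ?_⟩
  have hb := sum_reachBefore_lt_one hP hs hp.2 hρ hps
  refine ⟨hb, ?_⟩
  rw [eq_div_iff (sub_pos.2 hb).ne']
  linarith

/-- Decomposition of the reachability probability at `s` into reaching `T`
avoiding `s` and returning to `s` before `T`. -/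
theorem reach_prob_decomposition
    {S : Type*} [Fintype S] [Nonempty S]
    (P : S → S → ℝ) (hP : IsStochastic P)
    (T : Set S) (s : S) (hs : s ∉ T)
    (p : S → ℝ) (hp : IsReachVec P T p)
    (q : S → ℝ)
    (hq : AvoidReachSol P T s q ∧ ∀ q', AvoidReachSol P T s q' → ∀ t, q t ≤ q' t)
    (ρ : S → ℝ)
    (hρ : ReachBeforeSol P T s ρ ∧ ∀ ρ', ReachBeforeSol P T s ρ' → ∀ t, ρ t ≤ ρ' t) :
    p s = (∑ s', P s s' * q s') + (∑ s', P s s' * ρ s') * p s ∧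
      (0 < p s → (∑ s', P s s' * ρ s') < 1 ∧
        p s = (∑ s', P s s' * q s') / (1 - ∑ s', P s s' * ρ s')) :=
  reach_prob_decomposition_general P hP T s hs p hp q hq ρ hρ
end

section
/- Let S be a nonempty finite type, T ⊆ S a target set, ŝ ∈ S with ŝ ∉ T, and a ≤ b reals. Let P : ℝ → S → S → ℝ be such that: (i) for every s', the map x ↦ P x ŝ s' is affine; (ii) for every s ≠ ŝ and every s', P x s s' is constant in x; (iii) for every x ∈ [a, b] the matrix P x is stochastic; and (iv) for all s, s', either P x s s' = 0 for all x ∈ [a, b] or P x s s' > 0 for all x ∈ [a, b]. For x ∈ [a, b] let p(x) be the reachability-probability vector of (P x, T), assumed to exist. Then either for every state t the map x ↦ p(x) t is monotone on [a, b], or for every state t it is antitone on [a, b]; in particular, for every t and every x ∈ [a, b], p(x) t ≤ max (p(a) t) (p(b) t). -/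
/-!
Make `shat` and `T` absorbing: the resulting chain no longer depends on the parameter. If `g` and
`h` are its probabilities of reaching `T` and `shat`, every reachability vector splits as
`p x = g + p x shat • h`. Evaluated at `shat` this reads `p x shat = G x + H x * p x shat` with `G`,
`H` affine, so `p x shat = G x / (1 - H x)` is a Möbius function of `x`, hence monotone or
antitone, and the other coordinates follow it because `h ≥ 0`. In the degenerate case `H x = 1`
the support condition forces `H = 1` on all of `[a, b]`, and there `p x shat = 0`.

All comparisons go through least solutions being least among supersolutions as well; this holds
because they are least fixed points of the Bellman operator on the complete lattice `S → [0, 1]`.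
-/

open Finset

section

variable {S : Type*}

open Classical in
noncomputable def absorbing (P : S → S → ℝ) (A : Set S) : S → S → ℝ :=
  fun s => if s ∈ A then Pi.single s 1 else P s

theorem absorbing_of_notMem {P : S → S → ℝ} {A : Set S} {s : S} (hs : s ∉ A) :
    absorbing P A s = P s :=
  if_neg hs

theorem absorbing_congr {P P' : S → S → ℝ} {A : Set S} (h : ∀ s ∉ A, P s = P' s) :
    absorbing P A = absorbing P' A := by
  funext s
  by_cases hs : s ∈ A
  · simp [absorbing, hs]
  · rw [absorbing_of_notMem hs, absorbing_of_notMem hs, h s hs]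

variable [Fintype S]

def ReachSupersol (P : S → S → ℝ) (T : Set S) (q : S → ℝ) : Prop :=
  (∀ s, 0 ≤ q s) ∧ (∀ s ∈ T, q s = 1) ∧ ∀ s ∉ T, ∑ s', P s s' * q s' ≤ q s

theorem ReachSol.reachSupersol {P : S → S → ℝ} {T : Set S} {q : S → ℝ} (hq : ReachSol P T q) :
    ReachSupersol P T q :=
  ⟨hq.1, hq.2.1, fun s hs => (hq.2.2 s hs).ge⟩

theorem sum_mul_add_mul_s6 (r v w : S → ℝ) (c : ℝ) :
    ∑ s, r s * (v s + w s * c) = ∑ s, r s * v s + (∑ s, r s * w s) * c := by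
  rw [sum_mul, ← sum_add_distrib]
  exact sum_congr rfl fun _ _ => by ring

namespace IsStochastic

variable {P : S → S → ℝ}

theorem sum_mul_le_sum_mul (hP : IsStochastic P) {v w : S → ℝ} (hvw : v ≤ w) (s : S) :
    ∑ s', P s s' * v s' ≤ ∑ s', P s s' * w s' :=
  sum_le_sum fun s' _ => mul_le_mul_of_nonneg_left (hvw s') (hP.1 s s')

theorem sum_mul_nonneg (hP : IsStochastic P) {v : S → ℝ} (hv : 0 ≤ v) (s : S) :
    0 ≤ ∑ s', P s s' * v s' :=
  sum_nonneg fun s' _ => mul_nonneg (hP.1 s s') (hv s')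

theorem sum_mul_le_one (hP : IsStochastic P) {v : S → ℝ} (hv : v ≤ 1) (s : S) :
    ∑ s', P s s' * v s' ≤ 1 := by
  simpa [hP.2 s] using hP.sum_mul_le_sum_mul hv s

theorem sum_mul_eq_one_iff (hP : IsStochastic P) {v : S → ℝ} (hv : v ≤ 1) (s : S) :
    ∑ s', P s s' * v s' = 1 ↔ ∀ s', P s s' ≠ 0 → v s' = 1 := by
  have hdefect : ∑ s', P s s' * v s' = 1 - ∑ s', P s s' * (1 - v s') := by
    simp [mul_sub, hP.2 s]
  rw [hdefect, sub_eq_self, sum_eq_zero_iff_of_nonneg fun s' _ =>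
    mul_nonneg (hP.1 s s') (sub_nonneg.2 (show v s' ≤ 1 from hv s'))]
  simp only [mem_univ, forall_const, mul_eq_zero, sub_eq_zero, or_iff_not_imp_left]
  exact forall_congr' fun s' => imp_congr_right fun _ => eq_comm

theorem sum_mul_eq_one_of_support_subset {P' : S → S → ℝ} (hP : IsStochastic P)
    (hP' : IsStochastic P') {v : S → ℝ} (hv : v ≤ 1) {s : S}
    (hsupp : ∀ s', P' s s' ≠ 0 → P s s' ≠ 0) (h1 : ∑ s', P s s' * v s' = 1) :
    ∑ s', P' s s' * v s' = 1 :=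
  (hP'.sum_mul_eq_one_iff hv s).2 fun s' hs' => (hP.sum_mul_eq_one_iff hv s).1 h1 s' (hsupp s' hs')

open Classical in
noncomputable def reachOp (hP : IsStochastic P) (T : Set S) :
    (S → unitInterval) →o (S → unitInterval) where
  toFun v s := if s ∈ T then 1 else
    ⟨∑ s', P s s' * v s', hP.sum_mul_nonneg (fun s' => (v s').2.1) s,
      hP.sum_mul_le_one (fun s' => (v s').2.2) s⟩
  monotone' v w hvw s := by
    dsimp only
    split_ifs
    · exact le_rfl
    · exact hP.sum_mul_le_sum_mul (fun s' => hvw s') s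

open Classical in
theorem coe_reachOp_apply (hP : IsStochastic P) (T : Set S) (v : S → unitInterval) (s : S) :
    (hP.reachOp T v s : ℝ) = if s ∈ T then 1 else ∑ s', P s s' * v s' :=
  apply_ite Subtype.val _ _ _

theorem exists_reachSol_forall_le (hP : IsStochastic P) (T : Set S) :
    ∃ p, ReachSol P T p ∧ ∀ q, ReachSupersol P T q → p ≤ q := by
  classical
  set F := hP.reachOp T
  have hfix : ∀ s, (OrderHom.lfp F s : ℝ) =
      if s ∈ T then 1 else ∑ s', P s s' * OrderHom.lfp F s' := fun s => by
    rw [← hP.coe_reachOp_apply T, F.map_lfp]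
  refine ⟨fun s => OrderHom.lfp F s, ⟨fun s => (OrderHom.lfp F s).2.1, fun s hs => ?_,
    fun s hs => ?_⟩, fun q hq s => ?_⟩
  · simpa [hs] using hfix s
  · simpa [hs] using hfix s
  · -- truncating at 1 keeps a supersolution inside the lattice `S → [0, 1]`
    let q' : S → unitInterval := fun s =>
      ⟨min (q s) 1, le_min (hq.1 s) zero_le_one, min_le_right _ _⟩
    have hq' : F q' ≤ q' := by
      intro s
      rw [← Subtype.coe_le_coe, coe_reachOp_apply]
      split_ifs with hs
      · simp [q', hq.2.1 s hs]
      · exact le_min ((hP.sum_mul_le_sum_mul (fun s' => min_le_left _ _) s).trans (hq.2.2 s hs))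
          (hP.sum_mul_le_one (fun s' => min_le_right _ _) s)
    exact (Subtype.coe_le_coe.2 (OrderHom.lfp_le F hq' s)).trans (min_le_left _ _)

end IsStochastic

section Reach

variable {P : S → S → ℝ} {T : Set S} {p q : S → ℝ}

theorem IsStochastic.exists_isReachVec (hP : IsStochastic P) (T : Set S) :
    ∃ p, IsReachVec P T p :=
  let ⟨p, hp, hle⟩ := hP.exists_reachSol_forall_le T
  ⟨p, hp, fun q hq => hle q hq.reachSupersol⟩

theorem IsReachVec.le_of_reachSupersol (hP : IsStochastic P) (hp : IsReachVec P T p)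
    (hq : ReachSupersol P T q) : p ≤ q := by
  obtain ⟨p', hp', hle⟩ := hP.exists_reachSol_forall_le T
  exact fun s => (hp.2 p' hp' s).trans (hle q hq s)

theorem IsReachVec.le_one (hP : IsStochastic P) (hp : IsReachVec P T p) : p ≤ 1 :=
  hp.le_of_reachSupersol hP
    ⟨fun _ => zero_le_one, fun _ _ => rfl, fun s _ => hP.sum_mul_le_one le_rfl s⟩

end Reach

section Absorbing

variable {P : S → S → ℝ} {A T : Set S} {s : S} {g : S → ℝ}

theorem sum_absorbing_mul_of_mem (hs : s ∈ A) (v : S → ℝ) :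
    ∑ s', absorbing P A s s' * v s' = v s := by
  classical
  simp [absorbing, hs, Pi.single_apply]

theorem IsStochastic.absorbing (hP : IsStochastic P) (A : Set S) :
    IsStochastic (absorbing P A) := by
  classical
  refine ⟨fun s s' => ?_, fun s => ?_⟩
  · by_cases hs : s ∈ A
    · simp only [_root_.absorbing, hs, if_true, Pi.single_apply]
      split_ifs <;> norm_num
    · rw [absorbing_of_notMem hs]; exact hP.1 s s'
  · by_cases hs : s ∈ A
    · simpa using sum_absorbing_mul_of_mem (P := P) hs 1
    · rw [absorbing_of_notMem hs]; exact hP.2 s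

theorem IsReachVec.eq_zero_of_mem_absorbing (hP : IsStochastic P)
    (hg : IsReachVec (absorbing P A) T g) (hsA : s ∈ A) (hsT : s ∉ T) : g s = 0 := by
  classical
  let q : S → ℝ := fun r => if r ∈ A ∧ r ∉ T then 0 else g r
  have hqg : q ≤ g := fun r => by
    dsimp only [q]; split_ifs
    exacts [hg.1.1 r, le_rfl]
  have hq : ReachSupersol (absorbing P A) T q := by
    refine ⟨fun r => ?_, fun r hr => by simp [q, hr, hg.1.2.1 r hr], fun r hr => ?_⟩
    · dsimp only [q]; split_ifs
      exacts [le_rfl, hg.1.1 r]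
    · by_cases hrA : r ∈ A
      · rw [sum_absorbing_mul_of_mem hrA]
      · calc ∑ r', absorbing P A r r' * q r' ≤ ∑ r', absorbing P A r r' * g r' :=
              (hP.absorbing A).sum_mul_le_sum_mul hqg r
          _ = q r := by simp [q, hrA, ← hg.1.2.2 r hr]
  have := hg.le_of_reachSupersol (hP.absorbing A) hq s
  simp only [q, hsA, hsT, not_false_eq_true, and_self, if_true] at this
  exact le_antisymm this (hg.1.1 s)

end Absorbing

section Split

variable {P : S → S → ℝ} {T : Set S} {u : S} {p g h : S → ℝ}

theorem ReachSol.div_absorbing_insert (hp : ReachSol P T p) (hpu : p u ≠ 0) :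
    ReachSol (absorbing P (insert u T)) {u} fun s => p s / p u := by
  refine ⟨fun s => div_nonneg (hp.1 s) (hp.1 u),
    fun s hs => by simp [Set.mem_singleton_iff.1 hs, hpu], fun s hs => ?_⟩
  by_cases hsT : s ∈ T
  · rw [sum_absorbing_mul_of_mem (Set.mem_insert_of_mem u hsT)]
  · dsimp only
    rw [absorbing_of_notMem (by simp_all), hp.2.2 s hsT, sum_div]
    simp only [mul_div_assoc]

theorem IsReachVec.add_mul_le (hP : IsStochastic P) (hu : u ∉ T) (hp : IsReachVec P T p)
    (hg : IsReachVec (absorbing P (insert u T)) T g)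
    (hh : IsReachVec (absorbing P (insert u T)) {u} h) (s : S) :
    g s + h s * p u ≤ p s := by
  have hhp : ∀ s, h s * p u ≤ p s := fun s => by
    rcases (hp.1.1 u).eq_or_lt with hpu | hpu
    · simp [← hpu, hp.1.1 s]
    · exact (le_div_iff₀ hpu).1 (hh.2 _ (ReachSol.div_absorbing_insert hp.1 hpu.ne') s)
  have hhT : ∀ s ∈ T, h s = 0 := fun s hs =>
    hh.eq_zero_of_mem_absorbing hP (Set.mem_insert_of_mem u hs) (by rintro rfl; exact hu hs)
  have hsol : ReachSol (absorbing P (insert u T)) T fun s => p s - h s * p u := by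
    refine ⟨fun s => sub_nonneg.2 (hhp s), fun s hs => by simp [hp.1.2.1 s hs, hhT s hs],
      fun s hs => ?_⟩
    by_cases hsu : s = u
    · rw [sum_absorbing_mul_of_mem (by simp [hsu])]
    · have hsA : s ∉ insert u T := by simp [hsu, hs]
      have hhs := hh.1.2.2 s hsu
      rw [absorbing_of_notMem hsA] at hhs ⊢
      dsimp only
      rw [hp.1.2.2 s hs, hhs, sum_mul, ← sum_sub_distrib]
      exact sum_congr rfl fun _ _ => by ring
  linarith [hg.2 _ hsol s]

theorem IsReachVec.eq_add_mul (hP : IsStochastic P) (hu : u ∉ T) (hp : IsReachVec P T p)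
    (hg : IsReachVec (absorbing P (insert u T)) T g)
    (hh : IsReachVec (absorbing P (insert u T)) {u} h) (s : S) :
    p s = g s + h s * p u := by
  have hsuper : ReachSupersol P T fun s => g s + h s * p u := by
    refine ⟨fun s => add_nonneg (hg.1.1 s) (mul_nonneg (hh.1.1 s) (hp.1.1 u)), fun s hs => ?_,
      fun s hs => ?_⟩
    · dsimp only
      rw [hg.1.2.1 s hs, hh.eq_zero_of_mem_absorbing hP (Set.mem_insert_of_mem u hs)
        (by rintro rfl; exact hu hs)]
      ring
    by_cases hsu : s = u
    · subst hsu
      calc ∑ s', P s s' * (g s' + h s' * p s) ≤ ∑ s', P s s' * p s' :=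
            hP.sum_mul_le_sum_mul (hp.add_mul_le hP hu hg hh) s
        _ = g s + h s * p s := by
          rw [← hp.1.2.2 s hu, hg.eq_zero_of_mem_absorbing hP (Set.mem_insert s T) hu,
            hh.1.2.1 s rfl]
          ring
    · have hsA : s ∉ insert u T := by simp [hsu, hs]
      have hgs := hg.1.2.2 s hs
      have hhs := hh.1.2.2 s hsu
      rw [absorbing_of_notMem hsA] at hgs hhs
      rw [sum_mul_add_mul_s6, ← hgs, ← hhs]
  exact le_antisymm (hp.le_of_reachSupersol hP hsuper s) (hp.add_mul_le hP hu hg hh s)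

theorem IsReachVec.apply_eq_add_mul (hP : IsStochastic P) (hu : u ∉ T) (hp : IsReachVec P T p)
    (hg : IsReachVec (absorbing P (insert u T)) T g)
    (hh : IsReachVec (absorbing P (insert u T)) {u} h) :
    p u = ∑ s, P u s * g s + (∑ s, P u s * h s) * p u := by
  calc p u = ∑ s, P u s * p s := hp.1.2.2 u hu
    _ = ∑ s, P u s * (g s + h s * p u) :=
        sum_congr rfl fun s _ => by rw [hp.eq_add_mul hP hu hg hh s]
    _ = _ := sum_mul_add_mul_s6 _ _ _ _

theorem IsReachVec.apply_eq_zero_of_sum_mul_eq_one (hP : IsStochastic P) (hu : u ∉ T)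
    (hp : IsReachVec P T p) (hg : IsReachVec (absorbing P (insert u T)) T g)
    (hh : IsReachVec (absorbing P (insert u T)) {u} h) (hH : ∑ s, P u s * h s = 1) :
    p u = 0 := by
  have hgu : g u = 0 := hg.eq_zero_of_mem_absorbing hP (Set.mem_insert u T) hu
  have hG : ∑ s, P u s * g s = 0 := by
    have := hp.apply_eq_add_mul hP hu hg hh
    rw [hH, one_mul] at this
    linarith
  -- with no escape from `u` towards `T`, `g` solves the original system as well
  have hgsol : ReachSol P T g := by
    refine ⟨hg.1.1, hg.1.2.1, fun s hs => ?_⟩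
    by_cases hsu : s = u
    · rw [hsu, hgu, hG]
    · have hgs := hg.1.2.2 s hs
      rwa [absorbing_of_notMem (by simp [hsu, hs])] at hgs
  exact le_antisymm (hgu ▸ hp.2 g hgsol u) (hp.1.1 u)

end Split

theorem IsAffine.sum_mul {F : ℝ → S → ℝ} (hF : ∀ s, IsAffine fun x => F x s) (w : S → ℝ) :
    IsAffine fun x => ∑ s, F x s * w s := by
  choose c d hcd using hF
  refine ⟨∑ s, c s * w s, ∑ s, d s * w s, fun x => ?_⟩
  rw [Finset.sum_mul, ← sum_add_distrib]
  exact sum_congr rfl fun s _ => by linear_combination w s * hcd s x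

theorem monotoneOn_or_antitoneOn_of_eq_add_mul {I : Set ℝ} {f G H : ℝ → ℝ} (hG : IsAffine G)
    (hH : IsAffine H) (hH1 : ∀ x ∈ I, H x < 1) (hf : ∀ x ∈ I, f x = G x + H x * f x) :
    MonotoneOn f I ∨ AntitoneOn f I := by
  obtain ⟨c, d, hG⟩ := hG
  obtain ⟨c', d', hH⟩ := hH
  -- `f = G / (1 - H)` is a Möbius map: its increments have the sign of its determinant
  have hincr : ∀ x ∈ I, ∀ y ∈ I,
      (f y - f x) * ((1 - H x) * (1 - H y)) = (y - x) * (c * (1 - d') + d * c') := by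
    intro x hx y hy
    have hfx := hf x hx
    have hfy := hf y hy
    rw [hG, hH] at hfx hfy
    rw [hH, hH]
    linear_combination (1 - (c' * x + d')) * hfy - (1 - (c' * y + d')) * hfx
  have hden : ∀ x ∈ I, ∀ y ∈ I, 0 < (1 - H x) * (1 - H y) := fun x hx y hy =>
    mul_pos (sub_pos.2 (hH1 x hx)) (sub_pos.2 (hH1 y hy))
  rcases le_total 0 (c * (1 - d') + d * c') with hΔ | hΔ
  · refine Or.inl fun x hx y hy hxy => sub_nonneg.1 (nonneg_of_mul_nonneg_left ?_ (hden x hx y hy))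
    rw [hincr x hx y hy]
    exact mul_nonneg (sub_nonneg.2 hxy) hΔ
  · refine Or.inr fun x hx y hy hxy => sub_nonpos.1 (nonpos_of_mul_nonpos_left ?_ (hden x hx y hy))
    rw [hincr x hx y hy]
    exact mul_nonpos_of_nonneg_of_nonpos (sub_nonneg.2 hxy) hΔ

theorem le_max_of_monotoneOn_or_antitoneOn {α β : Type*} [Preorder α] [LinearOrder β] {f : α → β}
    {a b x : α} (hf : MonotoneOn f (Set.Icc a b) ∨ AntitoneOn f (Set.Icc a b))
    (hx : x ∈ Set.Icc a b) : f x ≤ max (f a) (f b) := by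
  have hab := hx.1.trans hx.2
  rcases hf with hf | hf
  · exact (hf hx (Set.right_mem_Icc.2 hab) hx.2).trans (le_max_right _ _)
  · exact (hf (Set.left_mem_Icc.2 hab) hx hx.1).trans (le_max_left _ _)

theorem monotoneOn_or_antitoneOn_reachVec_apply {I : Set ℝ} {P : ℝ → S → S → ℝ} {T : Set S}
    {u : S} {p : ℝ → S → ℝ} {g h : S → ℝ} (hu : u ∉ T) (hstoch : ∀ x ∈ I, IsStochastic (P x))
    (haff : ∀ s, IsAffine fun x => P x u s)
    (hsupp : ∀ x ∈ I, ∀ y ∈ I, ∀ s, P x u s ≠ 0 → P y u s ≠ 0)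
    (hp : ∀ x ∈ I, IsReachVec (P x) T (p x))
    (hg : ∀ x ∈ I, IsReachVec (absorbing (P x) (insert u T)) T g)
    (hh : ∀ x ∈ I, IsReachVec (absorbing (P x) (insert u T)) {u} h) :
    MonotoneOn (fun x => p x u) I ∨ AntitoneOn (fun x => p x u) I := by
  have hh1 : ∀ x ∈ I, h ≤ 1 := fun x hx => (hh x hx).le_one ((hstoch x hx).absorbing _)
  by_cases hdeg : ∃ x₀ ∈ I, ∑ s, P x₀ u s * h s = 1
  · obtain ⟨x₀, hx₀, hH⟩ := hdeg
    have hzero : ∀ x ∈ I, p x u = 0 := fun x hx =>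
      (hp x hx).apply_eq_zero_of_sum_mul_eq_one (hstoch x hx) hu (hg x hx) (hh x hx)
        ((hstoch x₀ hx₀).sum_mul_eq_one_of_support_subset (hstoch x hx) (hh1 x hx)
          (hsupp x hx x₀ hx₀) hH)
    exact Or.inl fun x hx y hy _ => (hzero x hx).trans_le (hzero y hy).ge
  · push Not at hdeg
    exact monotoneOn_or_antitoneOn_of_eq_add_mul (IsAffine.sum_mul haff g) (IsAffine.sum_mul haff h)
      (fun x hx => ((hstoch x hx).sum_mul_le_one (hh1 x hx) u).lt_of_ne (hdeg x hx))
      fun x hx => (hp x hx).apply_eq_add_mul (hstoch x hx) hu (hg x hx) (hh x hx)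

end

theorem single_state_parameter_monotone_general
    {S : Type*} [Fintype S]
    (T : Set S) (shat : S) (hshat : shat ∉ T)
    (a b : ℝ) (hab : a ≤ b)
    (P : ℝ → S → S → ℝ)
    (haff : ∀ s', IsAffine fun x => P x shat s')
    (hconst : ∀ s, s ≠ shat → ∀ s' x y, P x s s' = P y s s')
    (hstoch : ∀ x ∈ Set.Icc a b, IsStochastic (P x))
    (hpos : ∀ s s', (∀ x ∈ Set.Icc a b, P x s s' = 0) ∨ ∀ x ∈ Set.Icc a b, 0 < P x s s')
    (p : ℝ → S → ℝ)
    (hp : ∀ x ∈ Set.Icc a b, IsReachVec (P x) T (p x)) :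
    ((∀ t, MonotoneOn (fun x => p x t) (Set.Icc a b)) ∨
        ∀ t, AntitoneOn (fun x => p x t) (Set.Icc a b)) ∧
      ∀ t, ∀ x ∈ Set.Icc a b, p x t ≤ max (p a t) (p b t) := by
  have hQ : IsStochastic (absorbing (P a) (insert shat T)) :=
    (hstoch a (Set.left_mem_Icc.2 hab)).absorbing _
  have hQx : ∀ x, absorbing (P x) (insert shat T) = absorbing (P a) (insert shat T) :=
    fun x => absorbing_congr fun s hs =>
      funext fun s' => hconst s (fun h => hs (h ▸ Set.mem_insert s T)) s' x a
  obtain ⟨g, hg⟩ := hQ.exists_isReachVec T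
  obtain ⟨h, hh⟩ := hQ.exists_isReachVec {shat}
  have hsplit : ∀ x ∈ Set.Icc a b, ∀ t, p x t = g t + h t * p x shat := fun x hx =>
    (hp x hx).eq_add_mul (hstoch x hx) hshat (hQx x ▸ hg) (hQx x ▸ hh)
  have hsupp : ∀ x ∈ Set.Icc a b, ∀ y ∈ Set.Icc a b, ∀ s, P x shat s ≠ 0 → P y shat s ≠ 0 :=
    fun x hx y hy s hs =>
      (hpos shat s).elim (fun h0 => absurd (h0 x hx) hs) fun hpos => (hpos y hy).ne'
  have hall : (∀ t, MonotoneOn (fun x => p x t) (Set.Icc a b)) ∨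
      ∀ t, AntitoneOn (fun x => p x t) (Set.Icc a b) := by
    refine (monotoneOn_or_antitoneOn_reachVec_apply hshat hstoch haff hsupp hp
      (fun x _ => hQx x ▸ hg) fun x _ => hQx x ▸ hh).imp
      (fun hf t x hx y hy hxy => ?_) fun hf t x hx y hy hxy => ?_ <;>
      simp only [hsplit x hx t, hsplit y hy t]
    · exact add_le_add_right (mul_le_mul_of_nonneg_left (hf hx hy hxy) (hh.1.1 t)) _
    · exact add_le_add_right (mul_le_mul_of_nonneg_left (hf hx hy hxy) (hh.1.1 t)) _
  exact ⟨hall, fun t x hx => le_max_of_monotoneOn_or_antitoneOn (hall.imp (· t) (· t)) hx⟩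

/-- For a one-parameter Markov chain family whose transition probabilities
depend (affinely) on the parameter only at the single state `shat`, the reachability
probabilities are all monotone or all antitone in the parameter; in particular they
are bounded by their values at the endpoints. -/
theorem single_state_parameter_monotone
    {S : Type*} [Fintype S] [Nonempty S]
    (T : Set S) (shat : S) (hshat : shat ∉ T)
    (a b : ℝ) (hab : a ≤ b)
    (P : ℝ → S → S → ℝ)
    (haff : ∀ s', IsAffine fun x => P x shat s')
    (hconst : ∀ s, s ≠ shat → ∀ s' x y, P x s s' = P y s s')
    (hstoch : ∀ x ∈ Set.Icc a b, IsStochastic (P x))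
    (hpos : ∀ s s', (∀ x ∈ Set.Icc a b, P x s s' = 0) ∨ ∀ x ∈ Set.Icc a b, 0 < P x s s')
    (p : ℝ → S → ℝ)
    (hp : ∀ x ∈ Set.Icc a b, IsReachVec (P x) T (p x)) :
    ((∀ t, MonotoneOn (fun x => p x t) (Set.Icc a b)) ∨
        ∀ t, AntitoneOn (fun x => p x t) (Set.Icc a b)) ∧
      ∀ t, ∀ x ∈ Set.Icc a b, p x t ≤ max (p a t) (p b t) :=
  single_state_parameter_monotone_general T shat hshat a b hab P haff hconst hstoch hpos p hp
end

section
/- Let P be a parametric Markov chain over states S, r a region (with bounds a, b) that is well-defined for P, T ⊆ S a target set and s₀ ∈ S. Form the substitution MDP: for every s ∉ T, let Act(s) = { (s' ↦ P v s s') | v a vertex of r } (a nonempty finite set of rows; each such row is stochastic since every vertex of r lies in r). Let vmax and vmin be the maximal and minimal reachability value vectors of this MDP for target T, assumed to exist. Then for every u ∈ r, the reachability-probability vector p_u of (P u, T) satisfies vmin s₀ ≤ p_u s₀ ≤ vmax s₀. -/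
open Finset

/-- The rows of the substitution MDP at state `s`: one row for every vertex of the region. -/
def VertexRows {V S : Type*} (P : (V → ℝ) → S → S → ℝ) (a b : V → ℝ) (s : S) :
    Set (S → ℝ) :=
  {row | ∃ v, IsVertex a b v ∧ row = fun s' => P v s s'}

/-- A solution of the maximal-reachability equation system of an MDP given by `Rows`. -/
def MaxSol {S : Type*} [Fintype S] (Rows : S → Set (S → ℝ)) (T : Set S) (v : S → ℝ) :
    Prop :=
  (∀ s, 0 ≤ v s) ∧ (∀ s ∈ T, v s = 1) ∧
    ∀ s ∉ T, IsGreatest ((fun row => ∑ s', row s' * v s') '' Rows s) (v s)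

/-- A solution of the minimal-reachability equation system of an MDP given by `Rows`. -/
def MinSol {S : Type*} [Fintype S] (Rows : S → Set (S → ℝ)) (T : Set S) (v : S → ℝ) :
    Prop :=
  (∀ s, 0 ≤ v s) ∧ (∀ s ∈ T, v s = 1) ∧
    ∀ s ∉ T, IsLeast ((fun row => ∑ s', row s' * v s') '' Rows s) (v s)

open Finset Filter Topology

/-- Vertices lie in the region. -/
lemma vertex_in_region {V : Type*} {a b v : V → ℝ} (hab : ∀ x, a x ≤ b x)
    (hv : IsVertex a b v) : InRegion a b v := by
  intro x
  rcases hv x with h | h <;> rw [h]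
  · exact ⟨le_refl _, hab x⟩
  · exact ⟨hab x, le_refl _⟩

/-- The set of vertices is finite. -/
lemma vertex_set_finite {V : Type*} [Fintype V] (a b : V → ℝ) :
    {v : V → ℝ | IsVertex a b v}.Finite := by
  have : {v : V → ℝ | IsVertex a b v} ⊆ Set.pi Set.univ (fun x => {a x, b x}) := by
    intro v hv
    intro x _
    rcases hv x with h | h <;> simp [h]
  exact Set.Finite.subset (Set.Finite.pi (fun i => (Set.finite_singleton _).insert _)) this

/-- A multi-affine function attains a value at least as large at some vertex. -/
lemma exists_vertex_ge {V : Type*} [Fintype V] [DecidableEq V]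
    {f : (V → ℝ) → ℝ} (hf : MultiAffine f) {a b : V → ℝ} (hab : ∀ x, a x ≤ b x)
    {u : V → ℝ} (hu : InRegion a b u) :
    ∃ v, IsVertex a b v ∧ f u ≤ f v := by
  have key : ∀ s : Finset V, ∃ v, InRegion a b v ∧ (∀ x ∈ s, v x = a x ∨ v x = b x) ∧
      f u ≤ f v := by
    intro s
    induction s using Finset.induction_on with
    | empty => exact ⟨u, hu, by simp, le_refl _⟩
    | @insert x s hx ih =>
      obtain ⟨v, hvreg, hvs, hvf⟩ := ih
      obtain ⟨c, d, hcd⟩ := hf x v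
      set e : ℝ := if 0 ≤ c then b x else a x with he
      have hee : e = a x ∨ e = b x := by
        rw [he]; split <;> simp
      have hfv : f v = c * v x + d := by
        have := hcd (v x)
        rwa [Function.update_eq_self] at this
      have hle : c * v x + d ≤ c * e + d := by
        rcases le_or_gt 0 c with h0 | h0
        · have : e = b x := by rw [he, if_pos h0]
          rw [this]
          have := (hvreg x).2
          nlinarith
        · have : e = a x := by rw [he, if_neg (not_le.mpr h0)]
          rw [this]
          have := (hvreg x).1
          nlinarith
      refine ⟨Function.update v x e, ?_, ?_, ?_⟩
      · intro y
        by_cases hy : y = x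
        · subst hy
          rw [Function.update_self]
          rcases hee with h | h <;> rw [h]
          · exact ⟨le_refl _, hab y⟩
          · exact ⟨hab y, le_refl _⟩
        · rw [Function.update_of_ne hy]
          exact hvreg y
      · intro y hy
        by_cases hyx : y = x
        · subst hyx
          rw [Function.update_self]
          exact hee
        · rw [Function.update_of_ne hyx]
          exact hvs y (Finset.mem_of_mem_insert_of_ne hy hyx)
      · calc f u ≤ f v := hvf
          _ = c * v x + d := hfv
          _ ≤ c * e + d := hle
          _ = f (Function.update v x e) := (hcd e).symm
  obtain ⟨v, hvreg, hvs, hvf⟩ := key Finset.univ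
  exact ⟨v, fun x => hvs x (Finset.mem_univ x), hvf⟩

/-- A multi-affine function attains a value at least as small at some vertex. -/
lemma exists_vertex_le {V : Type*} [Fintype V] [DecidableEq V]
    {f : (V → ℝ) → ℝ} (hf : MultiAffine f) {a b : V → ℝ} (hab : ∀ x, a x ≤ b x)
    {u : V → ℝ} (hu : InRegion a b u) :
    ∃ v, IsVertex a b v ∧ f v ≤ f u := by
  have hnf : MultiAffine (fun w => -(f w)) := by
    intro x w
    obtain ⟨c, d, hcd⟩ := hf x w
    refine ⟨-c, -d, fun t => ?_⟩
    show -(f (Function.update w x t)) = -c * t + -d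
    rw [hcd t]
    ring
  obtain ⟨v, hv, hle⟩ := exists_vertex_ge hnf hab hu
  exact ⟨v, hv, by linarith⟩

/-- Weighted row sums of a pMC are multi-affine. -/
lemma sum_multiAffine {V S : Type*} [Fintype V] [DecidableEq V] [Fintype S]
    (P : (V → ℝ) → S → S → ℝ) (hma : ∀ s s', MultiAffine fun u => P u s s')
    (s : S) (w : S → ℝ) : MultiAffine (fun u => ∑ s', P u s s' * w s') := by
  intro x u
  choose c d hcd using fun s' => hma s s' x u
  refine ⟨∑ s', c s' * w s', ∑ s', d s' * w s', fun t => ?_⟩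
  rw [Finset.sum_mul, ← Finset.sum_add_distrib]
  apply Finset.sum_congr rfl
  intro s' _
  have h : P (Function.update u x t) s s' = c s' * t + d s' := hcd s' t
  rw [h]
  ring

/-- Limit of `Finset.inf'` of pointwise-converging families. -/
lemma tendsto_finset_inf' {ι : Type*} {t : Finset ι} (ht : t.Nonempty)
    {g : ι → ℕ → ℝ} {l : ι → ℝ}
    (h : ∀ i ∈ t, Tendsto (g i) atTop (nhds (l i))) :
    Tendsto (fun n => t.inf' ht fun i => g i n) atTop (nhds (t.inf' ht l)) := by
  revert h
  induction ht using Finset.Nonempty.cons_induction with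
  | singleton a =>
    intro h
    simpa using h a (by simp)
  | cons a s ha hs ih =>
    intro h
    simp only [Finset.inf'_cons hs]
    exact (h a (by simp)).min (ih (fun i hi => h i (Finset.mem_cons_of_mem hi)))

/-- Value iteration: given a prefixed point `p` of the Bellman min-operator over a
finite set of nonnegative rows, there is a fixed point `L ≤ p`. -/
lemma key_iter {S : Type*} [Fintype S] (T : Set S) {ι : Type*} (F : Finset ι)
    (hF : F.Nonempty) (row : ι → S → S → ℝ)
    (hrow : ∀ i ∈ F, ∀ s s', 0 ≤ row i s s')
    (p : S → ℝ) (hp0 : ∀ s, 0 ≤ p s) (hpT : ∀ s ∈ T, p s = 1)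
    (hpre : ∀ s ∉ T, ∃ i ∈ F, ∑ s', row i s s' * p s' ≤ p s) :
    ∃ L : S → ℝ, (∀ s, 0 ≤ L s) ∧ (∀ s ∈ T, L s = 1) ∧
      (∀ s ∉ T, L s = F.inf' hF (fun i => ∑ s', row i s s' * L s')) ∧
      ∀ s, L s ≤ p s := by
  classical
  set G : (S → ℝ) → S → ℝ :=
    fun w s => if s ∈ T then 1 else F.inf' hF (fun i => ∑ s', row i s s' * w s') with hG
  have hGmono : ∀ w w' : S → ℝ, (∀ s, w s ≤ w' s) → ∀ s, G w s ≤ G w' s := by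
    intro w w' hww s
    rw [hG]
    dsimp only
    split
    · exact le_refl _
    · apply Finset.le_inf'
      intro i hi
      refine le_trans (Finset.inf'_le _ hi) ?_
      apply Finset.sum_le_sum
      intro s' _
      exact mul_le_mul_of_nonneg_left (hww s') (hrow i hi s s')
  have hG0 : ∀ w : S → ℝ, (∀ s, 0 ≤ w s) → ∀ s, 0 ≤ G w s := by
    intro w hw s
    rw [hG]
    dsimp only
    split
    · exact zero_le_one
    · obtain ⟨i, hi, hieq⟩ := Finset.exists_mem_eq_inf' hF (fun i => ∑ s', row i s s' * w s')
      rw [hieq]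
      exact Finset.sum_nonneg fun s' _ => mul_nonneg (hrow i hi s s') (hw s')
  have hGp : ∀ s, G p s ≤ p s := by
    intro s
    rw [hG]
    dsimp only
    split
    · exact le_of_eq (hpT s (by assumption)).symm
    · obtain ⟨i, hi, hile⟩ := hpre s (by assumption)
      exact le_trans (Finset.inf'_le _ hi) hile
  set q : ℕ → S → ℝ := fun n => G^[n] (fun _ => 0) with hq
  have hqsucc : ∀ n, q (n + 1) = G (q n) := by
    intro n
    rw [hq]
    exact Function.iterate_succ_apply' G n _
  have hq0 : ∀ n s, 0 ≤ q n s := by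
    intro n
    induction n with
    | zero => intro s; exact le_refl _
    | succ n ih => intro s; rw [hqsucc]; exact hG0 _ ih s
  have hqle : ∀ n s, q n s ≤ p s := by
    intro n
    induction n with
    | zero => exact hp0
    | succ n ih =>
      intro s
      rw [hqsucc]
      exact le_trans (hGmono _ _ ih s) (hGp s)
  have hqstep : ∀ n s, q n s ≤ q (n + 1) s := by
    intro n
    induction n with
    | zero => intro s; exact hq0 1 s
    | succ n ih =>
      intro s
      rw [hqsucc, hqsucc]
      exact hGmono _ _ ih s
  have hqmono : ∀ s, Monotone fun n => q n s :=
    fun s => monotone_nat_of_le_succ fun n => hqstep n s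
  have hbdd : ∀ s, BddAbove (Set.range fun n => q n s) := by
    intro s
    exact ⟨p s, by rintro y ⟨n, rfl⟩; exact hqle n s⟩
  set L : S → ℝ := fun s => ⨆ n, q n s with hLdef
  have hL : ∀ s, Tendsto (fun n => q n s) atTop (nhds (L s)) :=
    fun s => tendsto_atTop_ciSup (hqmono s) (hbdd s)
  have hL1 : ∀ s, Tendsto (fun n => q (n + 1) s) atTop (nhds (L s)) :=
    fun s => (hL s).comp (tendsto_add_atTop_nat 1)
  refine ⟨L, ?_, ?_, ?_, ?_⟩
  · intro s
    exact le_ciSup_of_le (hbdd s) 0 (le_refl _)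
  · intro s hs
    have h1 : Tendsto (fun _ : ℕ => (1 : ℝ)) atTop (nhds (L s)) := by
      have : (fun n : ℕ => q (n + 1) s) = fun _ : ℕ => (1 : ℝ) := by
        funext n
        rw [hqsucc, hG]
        simp [hs]
      rw [← this]
      exact hL1 s
    exact tendsto_nhds_unique h1 tendsto_const_nhds
  · intro s hs
    have h2 : Tendsto (fun n => F.inf' hF fun i => ∑ s', row i s s' * q n s') atTop
        (nhds (F.inf' hF fun i => ∑ s', row i s s' * L s')) := by
      apply tendsto_finset_inf' hF
      intro i _
      apply tendsto_finset_sum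
      intro s' _
      exact (hL s').const_mul _
    have h3 : (fun n : ℕ => q (n + 1) s) =
        fun n => F.inf' hF fun i => ∑ s', row i s s' * q n s' := by
      funext n
      rw [hqsucc, hG]
      simp [hs]
    have h4 := hL1 s
    rw [h3] at h4
    exact tendsto_nhds_unique h4 h2
  · intro s
    exact ciSup_le fun n => hqle n s

/-- The maximal and minimal reachability value vectors of the substitution
MDP bound the reachability probabilities of every instantiation of the pMC in the region. -/
theorem substitution_mdp_bounds
    {V S : Type*} [Fintype V] [Nonempty V] [DecidableEq V] [Fintype S] [Nonempty S]
    (P : (V → ℝ) → S → S → ℝ)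
    (hma : ∀ s s', MultiAffine fun u => P u s s')
    (a b : V → ℝ) (hab : ∀ x, a x ≤ b x)
    (hwd : PMCWellDef P a b)
    (T : Set S) (s₀ : S)
    (vmax : S → ℝ)
    (hvmax : MaxSol (VertexRows P a b) T vmax ∧
      ∀ v', MaxSol (VertexRows P a b) T v' → ∀ s, vmax s ≤ v' s)
    (vmin : S → ℝ)
    (hvmin : MinSol (VertexRows P a b) T vmin ∧
      ∀ v', MinSol (VertexRows P a b) T v' → ∀ s, vmin s ≤ v' s)
    (p : (V → ℝ) → S → ℝ)
    (hp : ∀ u, InRegion a b u → IsReachVec (P u) T (p u)) :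
    ∀ u, InRegion a b u → vmin s₀ ≤ p u s₀ ∧ p u s₀ ≤ vmax s₀ := by
  intro u hu
  classical
  obtain ⟨⟨hp0, hpT, hpeq⟩, hpleast⟩ := hp u hu
  have hstoch := hwd.1
  have hfin := vertex_set_finite a b
  set Fv : Finset (V → ℝ) := hfin.toFinset with hFv
  have hmemFv : ∀ v, v ∈ Fv ↔ IsVertex a b v := by
    intro v
    rw [hFv, Set.Finite.mem_toFinset]
    rfl
  have hFvne : Fv.Nonempty := ⟨a, (hmemFv a).mpr fun x => Or.inl rfl⟩
  constructor
  · -- lower bound : vmin s₀ ≤ p u s₀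
    have hrow : ∀ v ∈ Fv, ∀ s s', 0 ≤ P v s s' := fun v hv s s' =>
      (hstoch v (vertex_in_region hab ((hmemFv v).mp hv))).1 s s'
    have hpre : ∀ s ∉ T, ∃ v ∈ Fv, ∑ s', P v s s' * p u s' ≤ p u s := by
      intro s hs
      obtain ⟨v, hv, hle⟩ := exists_vertex_le (sum_multiAffine P hma s (p u)) hab hu
      exact ⟨v, (hmemFv v).mpr hv, by rw [hpeq s hs]; exact hle⟩
    obtain ⟨L, hL0, hLT, hLeq, hLle⟩ :=
      key_iter T Fv hFvne (fun v s s' => P v s s') hrow (p u) hp0 hpT hpre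
    have hLmin : MinSol (VertexRows P a b) T L := by
      refine ⟨hL0, hLT, fun s hs => ⟨?_, ?_⟩⟩
      · obtain ⟨v₀, hv₀, heq⟩ :=
          Finset.exists_mem_eq_inf' hFvne (fun v => ∑ s', P v s s' * L s')
        refine ⟨fun s' => P v₀ s s', ⟨v₀, (hmemFv v₀).mp hv₀, rfl⟩, ?_⟩
        rw [hLeq s hs, heq]
      · rintro y ⟨row, ⟨v, hv, rfl⟩, rfl⟩
        rw [hLeq s hs]
        exact Finset.inf'_le _ ((hmemFv v).mpr hv)
    exact le_trans (hvmin.2 L hLmin s₀) (hLle s₀)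
  · -- upper bound : p u s₀ ≤ vmax s₀
    have hrow : ∀ i ∈ ({()} : Finset Unit), ∀ s s', 0 ≤ P u s s' := fun _ _ s s' =>
      (hstoch u hu).1 s s'
    have hpre : ∀ s ∉ T, ∃ i ∈ ({()} : Finset Unit),
        ∑ s', P u s s' * vmax s' ≤ vmax s := by
      intro s hs
      obtain ⟨v, hv, hle⟩ := exists_vertex_ge (sum_multiAffine P hma s vmax) hab hu
      refine ⟨(), Finset.mem_singleton_self _, le_trans hle ?_⟩
      exact (hvmax.1.2.2 s hs).2 ⟨fun s' => P v s s', ⟨v, hv, rfl⟩, rfl⟩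
    obtain ⟨L, hL0, hLT, hLeq, hLle⟩ :=
      key_iter T ({()} : Finset Unit) (Finset.singleton_nonempty _)
        (fun _ s s' => P u s s') hrow vmax hvmax.1.1 hvmax.1.2.1 hpre
    have hLsol : ReachSol (P u) T L := by
      refine ⟨hL0, hLT, fun s hs => ?_⟩
      rw [hLeq s hs, Finset.inf'_singleton]
    exact le_trans (hpleast L hLsol s₀) (hLle s₀)
end

section
/- Let (S, P) be a finite Markov chain and T ⊆ S a target set. Define a Markov chain P' on the type S ⊕ S by: P' (Sum.inl s) (Sum.inr s) = 1 and P' (Sum.inl s) t = 0 for every other t; P' (Sum.inr s) (Sum.inl s') = P s s' and P' (Sum.inr s) (Sum.inr s') = 0 for all s'. Let p be the reachability-probability vector of (P, T) and p' the reachability-probability vector of (P', {Sum.inl t | t ∈ T}), both assumed to exist. Then p' (Sum.inl s) = p s for every s ∈ S, and p' (Sum.inr s) = ∑_{s'} P s s' · p s' for every s ∈ S; i.e. inserting a deterministic intermediate state into every transition preserves reachability probabilities. -/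
open Finset

/-- The Markov chain obtained from `P` by inserting a deterministic intermediate copy of
each state into every transition: `inl s` moves to `inr s` with probability one, and
`inr s` moves to `inl s'` with probability `P s s'`. -/
def InsertMid {S : Type*} [DecidableEq S] (P : S → S → ℝ) :
    S ⊕ S → S ⊕ S → ℝ
  | Sum.inl s, Sum.inr s' => if s' = s then 1 else 0
  | Sum.inl _, Sum.inl _ => 0
  | Sum.inr s, Sum.inl s' => P s s'
  | Sum.inr _, Sum.inr _ => 0

/-- Inserting a deterministic intermediate state into every transition
preserves reachability probabilities. -/
theorem insert_intermediate_state_preserves_reach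
    {S : Type*} [Fintype S] [Nonempty S] [DecidableEq S]
    (P : S → S → ℝ) (hP : IsStochastic P)
    (T : Set S)
    (p : S → ℝ) (hp : IsReachVec P T p)
    (p' : S ⊕ S → ℝ)
    (hp' : IsReachVec (InsertMid P) {t | ∃ s ∈ T, t = Sum.inl s} p') :
    (∀ s, p' (Sum.inl s) = p s) ∧
      ∀ s, p' (Sum.inr s) = ∑ s', P s s' * p s' := by
  obtain ⟨⟨hp0, hpT, hpE⟩, hpmin⟩ := hp
  obtain ⟨⟨hp'0, hp'T, hp'E⟩, hp'min⟩ := hp'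
  have hinl : ∀ s : S, (Sum.inl s : S ⊕ S) ∈ {t | ∃ a ∈ T, t = Sum.inl a} ↔ s ∈ T := by
    intro s; simp [Sum.inl.injEq, eq_comm]
  have hinr : ∀ s : S, (Sum.inr s : S ⊕ S) ∉ {t | ∃ a ∈ T, t = Sum.inl a} := by
    intro s; simp
  -- sum computations
  have sumL : ∀ (f : S ⊕ S → ℝ) (s : S),
      ∑ t, InsertMid P (Sum.inl s) t * f t = f (Sum.inr s) := by
    intro f s
    rw [Fintype.sum_sum_type]
    simp [InsertMid, ite_mul]
  have sumR : ∀ (f : S ⊕ S → ℝ) (s : S),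
      ∑ t, InsertMid P (Sum.inr s) t * f t = ∑ s', P s s' * f (Sum.inl s') := by
    intro f s
    rw [Fintype.sum_sum_type]
    simp [InsertMid]
  -- p'(inr s) = ∑ P s s' * p'(inl s')
  have hr : ∀ s, p' (Sum.inr s) = ∑ s', P s s' * p' (Sum.inl s') := by
    intro s
    rw [hp'E _ (hinr s), sumR]
  -- for s ∉ T, p'(inl s) = p'(inr s)
  have hl : ∀ s ∉ T, p' (Sum.inl s) = p' (Sum.inr s) := by
    intro s hs
    rw [hp'E _ (by simpa [hinl s] using hs), sumL]
  -- q s := p'(inl s) is a solution for (P, T)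
  have hq : ReachSol P T (fun s => p' (Sum.inl s)) := by
    refine ⟨fun s => hp'0 _, fun s hs => hp'T _ ((hinl s).mpr hs), fun s hs => ?_⟩
    show p' (Sum.inl s) = _; rw [hl s hs, hr s]
  have hle : ∀ s, p s ≤ p' (Sum.inl s) := hpmin _ hq
  -- q' is a solution for (InsertMid P, T')
  have hq' : ReachSol (InsertMid P) {t | ∃ a ∈ T, t = Sum.inl a}
      (Sum.elim p (fun s => ∑ s', P s s' * p s')) := by
    refine ⟨?_, ?_, ?_⟩
    · rintro (s | s)
      · exact hp0 s
      · exact Finset.sum_nonneg fun s' _ => mul_nonneg (hP.1 s s') (hp0 s')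
    · rintro (s | s) ht
      · exact hpT s ((hinl s).mp ht)
      · exact absurd ht (hinr s)
    · rintro (s | s) ht
      · rw [sumL]
        simpa using hpE s (by simpa [hinl s] using ht)
      · rw [sumR]; simp
  have hge : ∀ t, p' t ≤ Sum.elim p (fun s => ∑ s', P s s' * p s') t := hp'min _ hq'
  have heql : ∀ s, p' (Sum.inl s) = p s :=
    fun s => le_antisymm (hge (Sum.inl s)) (hle s)
  refine ⟨heql, fun s => ?_⟩
  rw [hr s]
  exact Finset.sum_congr rfl fun s' _ => by rw [heql s']
end
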